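/- Under criticality (E[ξ]=1, Var(ξ)=2B ∈ (0,∞)) and φ(n) = o(n) with φ(n) → ∞, for every λ > 0, lim_{n→∞} (n²/(xφ(n))) [f_m(e^{λ log f_{⌊xφ(n)⌋}(0)}) - f_m(0)] = 1/(Bλ), where m = n - ⌊xφ(n)⌋ and x > 0 is fixed. -/

import Mathlib

/-!
Write `Q_j = f_j(0)` and `f(s) = s + (1 - s)² R(s)`, where `R(s) = ∑ p_k ∑_{i<k} ∑_{j<i} s^j` is
continuous on `[0, 1]` with `R(1) = B`. Then
`1/(1 - Q_{j+1}) - 1/(1 - Q_j) = R(Q_j) / (1 - (1 - Q_j) R(Q_j)) → B`, so `1/(1 - Q_j)` grows like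
`B j`, also over windows `[m, m + r]` with `m → ∞`. With `k = ⌊x φ(n)⌋` one has
`1 - Q_k^λ ∼ λ/(B k)` and `1 - Q_r ∼ 1/(B c k)` for `r = ⌈c k⌉`, so `Q_k^λ` lies between the `Q_r`
for `c` slightly below and slightly above `1/λ`. Applying the monotone `f_{n-k}`, the difference is
squeezed between values `Q_{n-k+r} - Q_{n-k} ∼ r/(B n²) ∼ c x φ(n)/(B n²)`.
-/

open MeasureTheory Filter Topology Asymptotics Real

/-- Probability generating function of the offspring distribution `p`. -/
noncomputable def pgf (p : ℕ → ℝ) (s : ℝ) : ℝ := ∑' k, p k * s ^ k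

/-- `n`-th functional iterate of the offspring generating function. -/
noncomputable def pgfIter (p : ℕ → ℝ) : ℕ → ℝ → ℝ
  | 0 => fun s => s
  | n + 1 => fun s => pgf p (pgfIter p n s)

open Finset

noncomputable def doubleGeomSum (s : ℝ) (k : ℕ) : ℝ := ∑ i ∈ range k, ∑ j ∈ range i, s ^ j

lemma pow_sub_one_add_mul_one_sub (s : ℝ) (k : ℕ) :
    s ^ k - 1 + k * (1 - s) = (1 - s) ^ 2 * doubleGeomSum s k := by
  induction k with
  | zero => simp [doubleGeomSum]
  | succ k ih =>
    rw [doubleGeomSum, sum_range_succ, ← doubleGeomSum, mul_add, ← ih]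
    push_cast
    linear_combination (1 - s) * geom_sum_mul s k

lemma doubleGeomSum_nonneg {s : ℝ} (hs : 0 ≤ s) (k : ℕ) : 0 ≤ doubleGeomSum s k := by
  unfold doubleGeomSum; positivity

lemma doubleGeomSum_mono {s t : ℝ} (hs : 0 ≤ s) (hst : s ≤ t) (k : ℕ) :
    doubleGeomSum s k ≤ doubleGeomSum t k := by
  unfold doubleGeomSum; gcongr

lemma doubleGeomSum_one (k : ℕ) : doubleGeomSum 1 k = ((k : ℝ) ^ 2 - k) / 2 := by
  induction k with
  | zero => simp [doubleGeomSum]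
  | succ k ih =>
    rw [doubleGeomSum, sum_range_succ, ← doubleGeomSum, ih]
    simp only [one_pow, sum_const, card_range, nsmul_eq_mul, mul_one]
    push_cast; ring

lemma doubleGeomSum_le_sq {s : ℝ} (hs : 0 ≤ s) (hs1 : s ≤ 1) (k : ℕ) :
    doubleGeomSum s k ≤ (k : ℝ) ^ 2 := by
  have := doubleGeomSum_mono hs hs1 k
  rw [doubleGeomSum_one] at this
  nlinarith [(k.cast_nonneg : (0 : ℝ) ≤ k)]

lemma one_le_doubleGeomSum {s : ℝ} (hs : 0 ≤ s) {k : ℕ} (hk : 2 ≤ k) :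
    1 ≤ doubleGeomSum s k := by
  calc (1 : ℝ) = ∑ j ∈ range 1, s ^ j := by simp
    _ ≤ doubleGeomSum s k :=
      single_le_sum (f := fun i => ∑ j ∈ range i, s ^ j) (fun i _ => by positivity)
        (mem_range.2 hk)

lemma continuous_doubleGeomSum (k : ℕ) : Continuous fun s => doubleGeomSum s k := by
  unfold doubleGeomSum; fun_prop

lemma summable_of_tsum_ne_zero {f : ℕ → ℝ} (h : ∑' k, f k ≠ 0) : Summable f :=
  not_not.1 (mt tsum_eq_zero_of_not_summable h)

section pgf

variable {p : ℕ → ℝ}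

lemma summable_pgf (hp0 : ∀ k, 0 ≤ p k) (hp : Summable p) {s : ℝ} (hs : s ∈ Set.Icc 0 1) :
    Summable fun k => p k * s ^ k :=
  hp.of_nonneg_of_le (fun k => mul_nonneg (hp0 k) (pow_nonneg hs.1 k))
    (fun k => mul_le_of_le_one_right (hp0 k) (pow_le_one₀ hs.1 hs.2))

lemma pgf_nonneg (hp0 : ∀ k, 0 ≤ p k) {s : ℝ} (hs : 0 ≤ s) : 0 ≤ pgf p s :=
  tsum_nonneg fun k => mul_nonneg (hp0 k) (pow_nonneg hs k)

lemma pgf_mono (hp0 : ∀ k, 0 ≤ p k) (hp : Summable p) {s t : ℝ} (hs : 0 ≤ s) (hst : s ≤ t)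
    (ht : t ≤ 1) : pgf p s ≤ pgf p t :=
  (summable_pgf hp0 hp ⟨hs, hst.trans ht⟩).tsum_le_tsum
    (fun k => mul_le_mul_of_nonneg_left (pow_le_pow_left₀ hs hst k) (hp0 k))
    (summable_pgf hp0 hp ⟨hs.trans hst, ht⟩)

lemma pgf_one (hp1 : ∑' k, p k = 1) : pgf p 1 = 1 := by simp [pgf, hp1]

lemma pgf_mem_Icc (hp0 : ∀ k, 0 ≤ p k) (hp1 : ∑' k, p k = 1) {s : ℝ} (hs : s ∈ Set.Icc 0 1) :
    pgf p s ∈ Set.Icc 0 1 :=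
  ⟨pgf_nonneg hp0 hs.1, pgf_one hp1 ▸
    pgf_mono hp0 (summable_of_tsum_ne_zero (by simp [hp1])) hs.1 hs.2 le_rfl⟩

lemma pgfIter_add (m r : ℕ) (s : ℝ) : pgfIter p (m + r) s = pgfIter p m (pgfIter p r s) := by
  induction m with
  | zero => simp [pgfIter]
  | succ m ih => rw [Nat.add_right_comm]; exact congrArg (pgf p) ih

lemma pgfIter_mem_Icc (hp0 : ∀ k, 0 ≤ p k) (hp1 : ∑' k, p k = 1) {s : ℝ}
    (hs : s ∈ Set.Icc 0 1) (m : ℕ) : pgfIter p m s ∈ Set.Icc 0 1 := by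
  induction m with
  | zero => exact hs
  | succ m ih => exact pgf_mem_Icc hp0 hp1 ih

lemma pgfIter_mono (hp0 : ∀ k, 0 ≤ p k) (hp1 : ∑' k, p k = 1) {s t : ℝ} (hs : 0 ≤ s)
    (hst : s ≤ t) (ht : t ≤ 1) (m : ℕ) : pgfIter p m s ≤ pgfIter p m t := by
  induction m with
  | zero => exact hst
  | succ m ih =>
    exact pgf_mono hp0 (summable_of_tsum_ne_zero (by simp [hp1]))
      (pgfIter_mem_Icc hp0 hp1 ⟨hs, hst.trans ht⟩ m).1 ih
      (pgfIter_mem_Icc hp0 hp1 ⟨hs.trans hst, ht⟩ m).2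

end pgf

/-- Offspring law with mean `1` and variance `2 * B > 0`. -/
structure IsCriticalOffspring (p : ℕ → ℝ) (B : ℝ) : Prop where
  nonneg : ∀ k, 0 ≤ p k
  tsum_eq_one : ∑' k, p k = 1
  tsum_mul_eq_one : ∑' k : ℕ, (k : ℝ) * p k = 1
  pos : 0 < B
  summable_sq_mul : Summable fun k : ℕ => (k : ℝ) ^ 2 * p k
  tsum_sq_mul_sub_one : (∑' k : ℕ, (k : ℝ) ^ 2 * p k) - 1 = 2 * B

noncomputable def pgfRemainder (p : ℕ → ℝ) (s : ℝ) : ℝ := ∑' k, p k * doubleGeomSum s k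

namespace IsCriticalOffspring

variable {p : ℕ → ℝ} {B : ℝ} (h : IsCriticalOffspring p B)
include h

lemma summable : Summable p := summable_of_tsum_ne_zero (by simp [h.tsum_eq_one])

lemma summable_mul : Summable fun k : ℕ => (k : ℝ) * p k :=
  summable_of_tsum_ne_zero (by simp [h.tsum_mul_eq_one])

lemma mul_doubleGeomSum_le {s : ℝ} (hs : s ∈ Set.Icc 0 1) (k : ℕ) :
    p k * doubleGeomSum s k ≤ (k : ℝ) ^ 2 * p k := by
  rw [mul_comm _ (p k)]
  exact mul_le_mul_of_nonneg_left (doubleGeomSum_le_sq hs.1 hs.2 k) (h.nonneg k)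

lemma summable_mul_doubleGeomSum {s : ℝ} (hs : s ∈ Set.Icc 0 1) :
    Summable fun k => p k * doubleGeomSum s k :=
  h.summable_sq_mul.of_nonneg_of_le
    (fun k => mul_nonneg (h.nonneg k) (doubleGeomSum_nonneg hs.1 k)) (h.mul_doubleGeomSum_le hs)

lemma pgf_sub_self {s : ℝ} (hs : s ∈ Set.Icc 0 1) :
    pgf p s - s = (1 - s) ^ 2 * pgfRemainder p s := by
  have hpgf := summable_pgf h.nonneg h.summable hs
  calc pgf p s - s
      = ∑' k, p k * s ^ k - ∑' k, p k + (∑' k : ℕ, (k : ℝ) * p k) * (1 - s) := by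
        rw [h.tsum_eq_one, h.tsum_mul_eq_one, pgf]; ring
    _ = ∑' k, (1 - s) ^ 2 * (p k * doubleGeomSum s k) := by
        rw [← hpgf.tsum_sub h.summable, ← tsum_mul_right,
          ← (hpgf.sub h.summable).tsum_add (h.summable_mul.mul_right (1 - s))]
        refine tsum_congr fun k => ?_
        linear_combination p k * pow_sub_one_add_mul_one_sub s k
    _ = (1 - s) ^ 2 * pgfRemainder p s := tsum_mul_left

lemma pgfRemainder_one : pgfRemainder p 1 = B := by
  have hsq := h.summable_sq_mul.div_const 2
  have hmul := h.summable_mul.div_const 2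
  calc pgfRemainder p 1
      = ∑' k : ℕ, ((k : ℝ) ^ 2 * p k / 2 - (k : ℝ) * p k / 2) :=
        tsum_congr fun k => by rw [doubleGeomSum_one]; ring
    _ = B := by
        rw [hsq.tsum_sub hmul, tsum_div_const, tsum_div_const, h.tsum_mul_eq_one]
        linarith [h.tsum_sq_mul_sub_one]

lemma continuousOn_pgfRemainder : ContinuousOn (pgfRemainder p) (Set.Icc 0 1) :=
  continuousOn_tsum (fun k => (continuous_const.mul (continuous_doubleGeomSum k)).continuousOn)
    h.summable_sq_mul fun k s hs => by
      rw [Real.norm_of_nonneg (mul_nonneg (h.nonneg k) (doubleGeomSum_nonneg hs.1 k))]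
      exact h.mul_doubleGeomSum_le hs k

lemma exists_two_le_pos : ∃ k, 2 ≤ k ∧ 0 < p k := by
  by_contra! hcon
  have hsq : ∑' k : ℕ, (k : ℝ) ^ 2 * p k = ∑' k : ℕ, (k : ℝ) * p k := by
    refine tsum_congr fun k => ?_
    match k with
    | 0 | 1 => norm_num
    | k + 2 => simp [le_antisymm (hcon (k + 2) (by omega)) (h.nonneg _)]
  linarith [h.tsum_sq_mul_sub_one, h.tsum_mul_eq_one, h.pos]

lemma pgf_lt_one {s : ℝ} (hs0 : 0 ≤ s) (hs1 : s < 1) : pgf p s < 1 := by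
  obtain ⟨k, hk, hpk⟩ := h.exists_two_le_pos
  have hsum := h.summable.sub (summable_pgf h.nonneg h.summable ⟨hs0, hs1.le⟩)
  have hpos : 0 < ∑' j, (p j - p j * s ^ j) :=
    hsum.tsum_pos (fun j => sub_nonneg.2 (mul_le_of_le_one_right (h.nonneg j)
      (pow_le_one₀ hs0 hs1.le))) k
      (by nlinarith [pow_lt_one₀ hs0 hs1 (by omega : k ≠ 0)])
  rw [h.summable.tsum_sub (summable_pgf h.nonneg h.summable ⟨hs0, hs1.le⟩), h.tsum_eq_one]
    at hpos
  exact sub_pos.1 hpos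

lemma exists_pos_le_pgfRemainder :
    ∃ c > 0, ∀ s ∈ Set.Icc (0 : ℝ) 1, c ≤ pgfRemainder p s := by
  obtain ⟨k, hk, hpk⟩ := h.exists_two_le_pos
  refine ⟨p k, hpk, fun s hs => ?_⟩
  calc p k ≤ p k * doubleGeomSum s k :=
        le_mul_of_one_le_right (h.nonneg k) (one_le_doubleGeomSum hs.1 hk)
    _ ≤ pgfRemainder p s := (h.summable_mul_doubleGeomSum hs).le_tsum k
        fun j _ => mul_nonneg (h.nonneg j) (doubleGeomSum_nonneg hs.1 j)

lemma one_sub_pgf {s : ℝ} (hs : s ∈ Set.Icc 0 1) :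
    1 - pgf p s = (1 - s) * (1 - (1 - s) * pgfRemainder p s) := by
  linear_combination -h.pgf_sub_self hs

lemma one_sub_mul_pgfRemainder_pos {s : ℝ} (hs0 : 0 ≤ s) (hs1 : s < 1) :
    0 < 1 - (1 - s) * pgfRemainder p s :=
  pos_of_mul_pos_right (h.one_sub_pgf ⟨hs0, hs1.le⟩ ▸ sub_pos.2 (h.pgf_lt_one hs0 hs1))
    (sub_pos.2 hs1).le

lemma inv_one_sub_pgf_sub {s : ℝ} (hs0 : 0 ≤ s) (hs1 : s < 1) :
    (1 - pgf p s)⁻¹ - (1 - s)⁻¹ = pgfRemainder p s / (1 - (1 - s) * pgfRemainder p s) := by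
  have hden := h.one_sub_mul_pgfRemainder_pos hs0 hs1
  rw [h.one_sub_pgf ⟨hs0, hs1.le⟩]
  field_simp [(sub_pos.2 hs1).ne']
  ring

lemma pgfIter_zero_mem_Ico (j : ℕ) : pgfIter p j 0 ∈ Set.Ico 0 1 := by
  induction j with
  | zero => simp [pgfIter]
  | succ j ih => exact ⟨pgf_nonneg h.nonneg ih.1, h.pgf_lt_one ih.1 ih.2⟩

lemma inv_one_sub_pgfIter_succ_sub (j : ℕ) :
    (1 - pgfIter p (j + 1) 0)⁻¹ - (1 - pgfIter p j 0)⁻¹ =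
      pgfRemainder p (pgfIter p j 0) /
        (1 - (1 - pgfIter p j 0) * pgfRemainder p (pgfIter p j 0)) :=
  h.inv_one_sub_pgf_sub (h.pgfIter_zero_mem_Ico j).1 (h.pgfIter_zero_mem_Ico j).2

lemma tendsto_pgfIter_zero : Tendsto (fun j => pgfIter p j 0) atTop (𝓝 1) := by
  obtain ⟨c, hc, hcR⟩ := h.exists_pos_le_pgfRemainder
  have hstep (j : ℕ) : c ≤ (1 - pgfIter p (j + 1) 0)⁻¹ - (1 - pgfIter p j 0)⁻¹ := by
    obtain ⟨hQ0, hQ1⟩ := h.pgfIter_zero_mem_Ico j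
    have hden := h.one_sub_mul_pgfRemainder_pos hQ0 hQ1
    have hR := hcR _ ⟨hQ0, hQ1.le⟩
    rw [h.inv_one_sub_pgfIter_succ_sub, le_div_iff₀ hden]
    nlinarith [mul_nonneg hc.le (mul_nonneg (sub_pos.2 hQ1).le (hc.le.trans hR))]
  have hlower (j : ℕ) : 1 + j * c ≤ (1 - pgfIter p j 0)⁻¹ := by
    induction j with
    | zero => simp [pgfIter]
    | succ j ih => push_cast; linarith [hstep j]
  have hgap : Tendsto (fun j : ℕ => 1 - pgfIter p j 0) atTop (𝓝 0) := by
    refine squeeze_zero (fun j => (sub_pos.2 (h.pgfIter_zero_mem_Ico j).2).le)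
      (fun j => ?_) (tendsto_atTop_add_const_left _ 1
        (tendsto_natCast_atTop_atTop.atTop_mul_const hc)).inv_tendsto_atTop
    have hpos := sub_pos.2 (h.pgfIter_zero_mem_Ico j).2
    simpa using inv_anti₀ (by positivity) (hlower j)
  simpa using hgap.const_sub 1

lemma tendsto_inv_one_sub_pgfIter_succ_sub :
    Tendsto (fun j => (1 - pgfIter p (j + 1) 0)⁻¹ - (1 - pgfIter p j 0)⁻¹) atTop (𝓝 B) := by
  have hQ := h.tendsto_pgfIter_zero
  have hR : Tendsto (fun j => pgfRemainder p (pgfIter p j 0)) atTop (𝓝 B) := by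
    rw [← h.pgfRemainder_one]
    exact (h.continuousOn_pgfRemainder 1 ⟨zero_le_one, le_rfl⟩).tendsto.comp
      (tendsto_nhdsWithin_iff.2 ⟨hQ, .of_forall fun j =>
        Set.Ico_subset_Icc_self (h.pgfIter_zero_mem_Ico j)⟩)
  have hlim := hR.div (((tendsto_const_nhds (x := (1 : ℝ))).sub hQ).mul hR |>.const_sub 1)
    (by simp)
  simp only [sub_self, zero_mul, sub_zero, div_one] at hlim
  exact hlim.congr fun j => (h.inv_one_sub_pgfIter_succ_sub j).symm

end IsCriticalOffspring

section Increments

variable {a : ℕ → ℝ} {B : ℝ}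

lemma tendsto_div_natCast_of_tendsto_sub (ha : Tendsto (fun j => a (j + 1) - a j) atTop (𝓝 B)) :
    Tendsto (fun j : ℕ => a j / j) atTop (𝓝 B) := by
  have hlim := ((tendsto_inv_atTop_zero.comp tendsto_natCast_atTop_atTop).mul_const (a 0)).add
    ha.cesaro
  rw [zero_mul, zero_add] at hlim
  refine hlim.congr fun j => ?_
  simp only [Function.comp_apply, sum_range_sub]
  ring

lemma abs_sub_sub_mul_le {ε : ℝ} {N : ℕ} (hN : ∀ i ≥ N, |a (i + 1) - a i - B| ≤ ε) {m : ℕ}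
    (hm : N ≤ m) (r : ℕ) : |a (m + r) - a m - r * B| ≤ r * ε := by
  induction r with
  | zero => simp
  | succ r ih =>
    calc |a (m + (r + 1)) - a m - ↑(r + 1) * B|
        = |(a (m + r + 1) - a (m + r) - B) + (a (m + r) - a m - r * B)| := by
          push_cast; ring_nf
      _ ≤ ε + r * ε := (abs_add_le _ _).trans (add_le_add (hN _ (by omega)) ih)
      _ = ↑(r + 1) * ε := by push_cast; ring

variable {ι : Type*} {L : Filter ι}

lemma tendsto_sub_div_of_tendsto_sub (ha : Tendsto (fun j => a (j + 1) - a j) atTop (𝓝 B))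
    {m r : ι → ℕ} (hm : Tendsto m L atTop) (hr : ∀ᶠ i in L, r i ≠ 0) :
    Tendsto (fun i => (a (m i + r i) - a (m i)) / r i) L (𝓝 B) := by
  refine Metric.tendsto_nhds.2 fun ε hε => ?_
  obtain ⟨N, hN⟩ := eventually_atTop.1 (Metric.tendsto_nhds.1 ha (ε / 2) (half_pos hε))
  filter_upwards [hm.eventually_ge_atTop N, hr] with i hi hri
  have hpos : (0 : ℝ) < r i := Nat.cast_pos.2 (Nat.pos_of_ne_zero hri)
  rw [Real.dist_eq, div_sub' hpos.ne', abs_div, abs_of_pos hpos, div_lt_iff₀ hpos]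
  calc |a (m i + r i) - a (m i) - r i * B|
      ≤ r i * (ε / 2) :=
        abs_sub_sub_mul_le (fun j hj => (Real.dist_eq _ _ ▸ hN j hj).le) hi _
    _ < ε * r i := by nlinarith

lemma tendsto_comp_div_of_tendsto_sub (ha : Tendsto (fun j => a (j + 1) - a j) atTop (𝓝 B))
    {j : ι → ℕ} {l : ι → ℝ} {c : ℝ} (hj : Tendsto j L atTop)
    (hjl : Tendsto (fun i => (j i : ℝ) / l i) L (𝓝 c)) :
    Tendsto (fun i => a (j i) / l i) L (𝓝 (B * c)) := by
  refine (((tendsto_div_natCast_of_tendsto_sub ha).comp hj).mul hjl).congr' ?_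
  filter_upwards [hj.eventually_ne_atTop 0] with i hi
  exact div_mul_div_cancel₀ (Nat.cast_ne_zero.2 hi)

end Increments

lemma tendsto_one_sub_exp_mul_log_div_one_sub (lam : ℝ) :
    Tendsto (fun s => (1 - exp (lam * log s)) / (1 - s)) (𝓝[≠] 1) (𝓝 lam) := by
  have hd : HasDerivAt (fun s => exp (lam * log s)) lam 1 := by
    simpa using ((Real.hasDerivAt_log one_ne_zero).const_mul lam).exp
  refine (hasDerivAt_iff_tendsto_slope.1 hd).congr fun s => ?_
  rw [slope_def_field, log_one, mul_zero, exp_zero, ← neg_div_neg_eq, neg_sub, neg_sub]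

lemma tendsto_natCast_sub_div {k : ℕ → ℕ} (hkn : Tendsto (fun n => (k n : ℝ) / n) atTop (𝓝 0)) :
    Tendsto (fun n => ((n - k n : ℕ) : ℝ) / n) atTop (𝓝 1) := by
  have hlim := hkn.const_sub 1
  rw [sub_zero] at hlim
  refine hlim.congr' ?_
  filter_upwards [hkn.eventually_lt_const one_pos, eventually_ne_atTop 0] with n hn hn0
  have hpos : (0 : ℝ) < n := Nat.cast_pos.2 (Nat.pos_of_ne_zero hn0)
  rw [div_lt_one hpos, Nat.cast_lt] at hn
  rw [Nat.cast_sub hn.le]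
  field_simp

lemma tendsto_atTop_of_tendsto_div_natCast {j : ℕ → ℕ} {c : ℝ} (hc : 0 < c)
    (hj : Tendsto (fun n => (j n : ℝ) / n) atTop (𝓝 c)) : Tendsto j atTop atTop := by
  refine tendsto_natCast_atTop_iff.1 <|
    (hj.pos_mul_atTop hc tendsto_natCast_atTop_atTop).congr' ?_
  filter_upwards [eventually_ne_atTop 0] with n hn
  exact div_mul_cancel₀ _ (Nat.cast_ne_zero.2 hn)

section ExtinctionSequence

variable {Q : ℕ → ℝ} {B : ℝ} {k : ℕ → ℕ}

lemma tendsto_one_of_tendsto_inv_one_sub_sub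
    (hinc : Tendsto (fun j => (1 - Q (j + 1))⁻¹ - (1 - Q j)⁻¹) atTop (𝓝 B)) (hB : 0 < B) :
    Tendsto Q atTop (𝓝 1) := by
  have ha : Tendsto (fun j => (1 - Q j)⁻¹) atTop atTop := by
    refine ((tendsto_div_natCast_of_tendsto_sub (a := fun j => (1 - Q j)⁻¹) hinc).pos_mul_atTop hB
      tendsto_natCast_atTop_atTop).congr' ?_
    filter_upwards [eventually_ne_atTop 0] with j hj
    exact div_mul_cancel₀ _ (Nat.cast_ne_zero.2 hj)
  simpa using ha.inv_tendsto_atTop.const_sub 1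

lemma tendsto_sq_div_mul_sub (hQ : ∀ j, Q j < 1)
    (hinc : Tendsto (fun j => (1 - Q (j + 1))⁻¹ - (1 - Q j)⁻¹) atTop (𝓝 B)) (hB : 0 < B)
    (hk : Tendsto k atTop atTop) (hkn : Tendsto (fun n => (k n : ℝ) / n) atTop (𝓝 0))
    {c : ℝ} (hc : 0 < c) :
    Tendsto (fun n : ℕ => ((n : ℝ) ^ 2 / k n) * (Q (n - k n + ⌈c * k n⌉₊) - Q (n - k n)))
      atTop (𝓝 (c / B)) := by
  have hrk : Tendsto (fun n => (⌈c * k n⌉₊ : ℝ) / k n) atTop (𝓝 c) :=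
    (tendsto_nat_ceil_mul_div_atTop hc.le).comp (tendsto_natCast_atTop_atTop.comp hk)
  have hr : Tendsto (fun n => ⌈c * k n⌉₊) atTop atTop :=
    tendsto_nat_ceil_atTop.comp ((tendsto_natCast_atTop_atTop.comp hk).const_mul_atTop hc)
  have hm := tendsto_natCast_sub_div hkn
  have hmr : Tendsto (fun n => ((n - k n + ⌈c * k n⌉₊ : ℕ) : ℝ) / n) atTop (𝓝 1) := by
    have hrn := (hrk.mul hkn).congr' (f₂ := fun n => (⌈c * k n⌉₊ : ℝ) / n) <| by
      filter_upwards [hk.eventually_ne_atTop 0] with n hn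
      exact div_mul_div_cancel₀ (Nat.cast_ne_zero.2 hn)
    simpa [add_div] using hm.add hrn
  have hwin := tendsto_sub_div_of_tendsto_sub (a := fun j => (1 - Q j)⁻¹) hinc
    (tendsto_atTop_of_tendsto_div_natCast one_pos hm) (hr.eventually_ne_atTop 0)
  have ham := tendsto_comp_div_of_tendsto_sub (a := fun j => (1 - Q j)⁻¹) hinc
    (tendsto_atTop_of_tendsto_div_natCast one_pos hm) hm
  have hamr := tendsto_comp_div_of_tendsto_sub (a := fun j => (1 - Q j)⁻¹) hinc
    (tendsto_atTop_of_tendsto_div_natCast one_pos hmr) hmr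
  have hlim := (hwin.mul hrk).div (ham.mul hamr) (by positivity)
  rw [show B * c / (B * 1 * (B * 1)) = c / B by field_simp] at hlim
  refine hlim.congr' ?_
  filter_upwards [hk.eventually_ne_atTop 0, hr.eventually_ne_atTop 0,
    eventually_ne_atTop 0] with n hk0 hr0 hn0
  have hu := (sub_pos.2 (hQ (n - k n))).ne'
  have hv := (sub_pos.2 (hQ (n - k n + ⌈c * k n⌉₊))).ne'
  simp only [Pi.div_apply]
  field_simp
  ring

lemma tendsto_one_sub_exp_mul_log_div (hQ : ∀ j, Q j < 1)
    (hinc : Tendsto (fun j => (1 - Q (j + 1))⁻¹ - (1 - Q j)⁻¹) atTop (𝓝 B)) (hB : 0 < B)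
    (hk : Tendsto k atTop atTop) (lam : ℝ) {c : ℝ} (hc : 0 < c) :
    Tendsto (fun n => (1 - exp (lam * log (Q (k n)))) / (1 - Q ⌈c * k n⌉₊)) atTop
      (𝓝 (lam * c)) := by
  have hslope := (tendsto_one_sub_exp_mul_log_div_one_sub lam).comp <|
    tendsto_nhdsWithin_iff.2 ⟨(tendsto_one_of_tendsto_inv_one_sub_sub hinc hB).comp hk,
      .of_forall fun n => (hQ (k n)).ne⟩
  have hak := ((tendsto_div_natCast_of_tendsto_sub (a := fun j => (1 - Q j)⁻¹) hinc).comp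
    hk).inv₀ hB.ne'
  have har := tendsto_comp_div_of_tendsto_sub (a := fun j => (1 - Q j)⁻¹) hinc
    (tendsto_nat_ceil_atTop.comp ((tendsto_natCast_atTop_atTop.comp hk).const_mul_atTop hc))
    ((tendsto_nat_ceil_mul_div_atTop hc.le).comp (tendsto_natCast_atTop_atTop.comp hk))
  have hlim := (hslope.mul hak).mul har
  rw [show lam * B⁻¹ * (B * c) = lam * c by field_simp] at hlim
  refine hlim.congr' ?_
  filter_upwards [hk.eventually_ne_atTop 0] with n hk0
  have hu := (sub_pos.2 (hQ (k n))).ne'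
  have hv := (sub_pos.2 (hQ ⌈c * k n⌉₊)).ne'
  simp only [Function.comp_apply]
  field_simp

end ExtinctionSequence

lemma exp_mul_log_le_one {y lam : ℝ} (hy0 : 0 ≤ y) (hy1 : y ≤ 1) (hlam : 0 ≤ lam) :
    exp (lam * log y) ≤ 1 :=
  exp_le_one_iff.2 (mul_nonpos_of_nonneg_of_nonpos hlam (log_nonpos hy0 hy1))

theorem IsCriticalOffspring.tendsto_sq_div_mul_pgfIter_sub {p : ℕ → ℝ} {B : ℝ}
    (h : IsCriticalOffspring p B) {k : ℕ → ℕ} (hk : Tendsto k atTop atTop)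
    (hkn : Tendsto (fun n => (k n : ℝ) / n) atTop (𝓝 0)) {lam : ℝ} (hlam : 0 < lam) :
    Tendsto (fun n : ℕ => ((n : ℝ) ^ 2 / k n) *
        (pgfIter p (n - k n) (exp (lam * log (pgfIter p (k n) 0))) - pgfIter p (n - k n) 0))
      atTop (𝓝 (1 / (B * lam))) := by
  have hQ := h.pgfIter_zero_mem_Ico
  have hQ1 (j : ℕ) : pgfIter p j 0 < 1 := (hQ j).2
  have hinc := h.tendsto_inv_one_sub_pgfIter_succ_sub
  have hwindow {c : ℝ} (hc : 0 < c) := tendsto_sq_div_mul_sub hQ1 hinc h.pos hk hkn hc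
  have hratio {c : ℝ} (hc : 0 < c) := tendsto_one_sub_exp_mul_log_div hQ1 hinc h.pos hk lam hc
  -- Squeeze `Q_k^λ` between values `Q_r`, `r = ⌈c k⌉`, with `c` on either side of `1 / λ`; the
  -- monotone `f_{n-k}` maps `Q_r` to `Q_{n-k+r}`.
  refine tendsto_order.2 ⟨fun b hb => ?_, fun b hb => ?_⟩
  · obtain ⟨c, hbc, hcl⟩ := exists_between (show max (b * B) 0 < 1 / lam by
      rw [lt_div_iff₀ (mul_pos h.pos hlam)] at hb
      rw [max_lt_iff, lt_div_iff₀ hlam]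
      exact ⟨by linarith, by positivity⟩)
    have hc : 0 < c := (le_max_right _ _).trans_lt hbc
    filter_upwards [(hwindow hc).eventually_const_lt
        ((lt_div_iff₀ h.pos).2 ((le_max_left _ _).trans_lt hbc)),
      (hratio hc).eventually_lt_const ((lt_div_iff₀' hlam).1 hcl)] with n hlow hs
    rw [div_lt_one (sub_pos.2 (hQ1 _)), sub_lt_sub_iff_left] at hs
    refine hlow.trans_le ?_
    rw [pgfIter_add]
    gcongr
    exact pgfIter_mono h.nonneg h.tsum_eq_one (hQ _).1 hs.le
      (exp_mul_log_le_one (hQ _).1 (hQ _).2.le hlam.le) _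
  · obtain ⟨c, hlc, hcb⟩ := exists_between (show 1 / lam < b * B by
      rw [gt_iff_lt, div_lt_iff₀ (mul_pos h.pos hlam)] at hb
      rw [div_lt_iff₀ hlam]
      linarith)
    have hc : 0 < c := (by positivity : (0 : ℝ) < 1 / lam).trans hlc
    filter_upwards [(hwindow hc).eventually_lt_const ((div_lt_iff₀ h.pos).2 hcb),
      (hratio hc).eventually_const_lt ((div_lt_iff₀' hlam).1 hlc)] with n hup hs
    rw [one_lt_div (sub_pos.2 (hQ1 _)), sub_lt_sub_iff_left] at hs
    refine lt_of_le_of_lt ?_ hup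
    rw [pgfIter_add]
    gcongr
    exact pgfIter_mono h.nonneg h.tsum_eq_one (exp_pos _).le hs.le (hQ _).2.le _

theorem difference_limit_small    (p : ℕ → ℝ) (hp0 : ∀ k, 0 ≤ p k) (hp1 : ∑' k, p k = 1)
    (hmean : ∑' k : ℕ, (k : ℝ) * p k = 1) (B : ℝ) (hB : 0 < B)
    (hsq : Summable fun k : ℕ => (k : ℝ) ^ 2 * p k)
    (hvar : (∑' k : ℕ, (k : ℝ) ^ 2 * p k) - 1 = 2 * B)
    (φ : ℕ → ℝ) (hφ : Tendsto φ atTop atTop)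
    (hφo : (fun n : ℕ => φ n) =o[atTop] fun n : ℕ => (n : ℝ)) :
    ∀ x : ℝ, 0 < x → ∀ lam : ℝ, 0 < lam →
      Tendsto (fun n : ℕ =>
          ((n : ℝ) ^ 2 / (x * φ n)) *
            (pgfIter p (n - ⌊x * φ n⌋₊)
                (Real.exp (lam * Real.log (pgfIter p ⌊x * φ n⌋₊ 0))) -
              pgfIter p (n - ⌊x * φ n⌋₊) 0))
        atTop (𝓝 (1 / (B * lam))) := by
  intro x hx lam hlam
  have hxφ : Tendsto (fun n => x * φ n) atTop atTop := hφ.const_mul_atTop hx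
  have hk : Tendsto (fun n => ⌊x * φ n⌋₊) atTop atTop := tendsto_nat_floor_atTop.comp hxφ
  have hkx : Tendsto (fun n => (⌊x * φ n⌋₊ : ℝ) / (x * φ n)) atTop (𝓝 1) :=
    tendsto_nat_floor_div_atTop.comp hxφ
  have hkn : Tendsto (fun n => (⌊x * φ n⌋₊ : ℝ) / n) atTop (𝓝 0) := by
    have hlim := hkx.mul (hφo.const_mul_left x).tendsto_div_nhds_zero
    rw [mul_zero] at hlim
    refine hlim.congr' ?_
    filter_upwards [hxφ.eventually_ne_atTop 0] with n hn
    exact div_mul_div_cancel₀ hn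
  have hlim := (IsCriticalOffspring.tendsto_sq_div_mul_pgfIter_sub
    ⟨hp0, hp1, hmean, hB, hsq, hvar⟩ hk hkn hlam).mul hkx
  rw [mul_one] at hlim
  refine hlim.congr' ?_
  filter_upwards [hxφ.eventually_ne_atTop 0, hk.eventually_ne_atTop 0] with n hn hk0
  have hk0' : (⌊x * φ n⌋₊ : ℝ) ≠ 0 := Nat.cast_ne_zero.2 hk0
  field_simp
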